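/- arXiv:1507.08641 — 5 statements merged into one kernel-verified Lean document; each statement's English description precedes it below -/
import Mathlib

section
/- Let C ⊆ F_{q^m}^n be a linear rank-metric code of dimension k over F_{q^m} (1 ≤ k ≤ n) with generator matrix G ∈ F_{q^m}^{k×n}. Then C is an MRD code if and only if for every invertible n×n matrix A with entries in F_q, every maximal minor of the matrix G·A (the product computed over F_{q^m}, viewing the entries of A inside F_{q^m}) is non-zero. -/
open Matrix

/-- The rank over the subfield `Fq` of a vector with entries in `K`:
the `Fq`-dimension of the `Fq`-span of its coordinates. -/
noncomputable def rankQ (Fq : Type) {K : Type} [Field Fq] [Field K] [Algebra Fq K] {n : ℕ}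
    (v : Fin n → K) : ℕ :=
  Module.finrank Fq (Submodule.span Fq (Set.range v))

/-- The minimum rank distance of a linear rank-metric code `C ⊆ K^n`. -/
noncomputable def minRankDist (Fq : Type) {K : Type} [Field Fq] [Field K] [Algebra Fq K] {n : ℕ}
    (C : Submodule K (Fin n → K)) : ℕ :=
  sInf (rankQ Fq '' {c : Fin n → K | c ∈ C ∧ c ≠ 0})

/-- A linear code `C ⊆ K^n` of dimension `k` over `K` is MRD if its minimum
rank distance equals `n - k + 1`. -/
def IsMRD (Fq : Type) {K : Type} [Field Fq] [Field K] [Algebra Fq K] {n : ℕ}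
    (C : Submodule K (Fin n → K)) (k : ℕ) : Prop :=
  Module.finrank K C = k ∧ minRankDist Fq C = n - k + 1

/-- `G` is a generator matrix of `C`: its rows form a `K`-basis of `C`. -/
def IsGenMat {K : Type} [Field K] {k n : ℕ} (C : Submodule K (Fin n → K))
    (G : Matrix (Fin k) (Fin n) K) : Prop :=
  LinearIndependent K (fun i => G i) ∧ Submodule.span K (Set.range fun i => G i) = C

/-! A codeword `c = x G` has `F_q`-rank `n - dim ker (y ↦ ∑ yᵢ cᵢ)`, so `rank c ≤ n - k` exactly
when `k` independent vectors of `F_q^n` lie in that kernel. Completed to an invertible `A`, they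
are `k` columns `φ` of `A` with `x (G A)_φ = 0`, i.e. they give a vanishing maximal minor of `G A`.
So all these minors are nonzero iff every nonzero codeword has rank `> n - k`, and the Singleton
bound (some nonzero codeword vanishes on `k - 1` coordinates, so has rank `≤ n - k + 1`) turns
this into `d = n - k + 1`. -/

open Module Finset

theorem Module.Basis.sumExtend_apply_inl {K V ι : Type*} [DivisionRing K] [AddCommGroup V]
    [Module K V] {v : ι → V} (hv : LinearIndependent K v) (i : ι) :
    Basis.sumExtend hv (Sum.inl i) = v i := by
  simp only [Basis.sumExtend, Basis.reindex_apply, Basis.extend_apply_self]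
  rfl

theorem Submodule.le_finrank_iff_exists_linearIndependent {K V : Type*} [DivisionRing K]
    [AddCommGroup V] [Module K V] [FiniteDimensional K V] (p : Submodule K V) (k : ℕ) :
    k ≤ finrank K p ↔ ∃ y : Fin k → V, LinearIndependent K y ∧ ∀ j, y j ∈ p := by
  constructor
  · intro hk
    obtain ⟨y, hy⟩ := exists_linearIndependent_of_le_finrank hk
    exact ⟨p.subtype ∘ y, hy.map' _ p.ker_subtype, fun j => (y j).2⟩
  · rintro ⟨y, hy, hyp⟩
    have hy' : LinearIndependent K (fun j => (⟨y j, hyp j⟩ : p)) :=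
      LinearIndependent.of_comp p.subtype hy
    simpa using hy'.fintype_card_le_finrank

theorem exists_isUnit_det_transpose_comp_eq {F : Type*} [Field F] {k n : ℕ}
    (y : Fin k → Fin n → F) (hy : LinearIndependent F y) :
    ∃ A : Matrix (Fin n) (Fin n) F, IsUnit A.det ∧
      ∃ φ : Fin k → Fin n, Function.Injective φ ∧ ∀ j, Aᵀ (φ j) = y j := by
  let b := Basis.sumExtend hy
  let e := b.indexEquiv (Pi.basisFun F (Fin n))
  refine ⟨Matrix.of fun i l => b (e.symm l) i, ?_, e ∘ Sum.inl, e.injective.comp Sum.inl_injective,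
    fun j => ?_⟩
  · rw [← Matrix.isUnit_iff_isUnit_det, ← Matrix.linearIndependent_cols_iff_isUnit]
    exact b.linearIndependent.comp _ e.symm.injective
  · ext i
    simp [b, Basis.sumExtend_apply_inl]

theorem Nat.sInf_image_eq_add_one_iff {α : Type*} {f : α → ℕ} {s : Set α} {a : ℕ}
    (h : ∃ x ∈ s, f x ≤ a + 1) : sInf (f '' s) = a + 1 ↔ ∀ x ∈ s, a < f x := by
  obtain ⟨x₀, hx₀, hfx₀⟩ := h
  constructor
  · intro hinf x hx
    have := Nat.sInf_le (Set.mem_image_of_mem f hx)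
    omega
  · intro hlt
    refine le_antisymm ((Nat.sInf_le (Set.mem_image_of_mem f hx₀)).trans hfx₀) ?_
    exact le_csInf ⟨_, Set.mem_image_of_mem f hx₀⟩ (by rintro _ ⟨x, hx, rfl⟩; exact hlt x hx)

theorem Matrix.vecMul_map_algebraMap_apply {R A m n : Type*} [CommSemiring R] [Semiring A]
    [Algebra R A] [Fintype m] (c : m → A) (M : Matrix m n R) (i : n) :
    (c ᵥ* M.map (algebraMap R A)) i = Fintype.linearCombination R c (Mᵀ i) := by
  simp only [vecMul, dotProduct, Fintype.linearCombination_apply, Algebra.smul_def,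
    Algebra.commutes, map_apply, transpose_apply]

theorem Matrix.exists_ne_zero_card_support_vecMul_le {K : Type*} [Field K] [DecidableEq K]
    {k n : ℕ} (G : Matrix (Fin k) (Fin n) K) (hk : 1 ≤ k) (hkn : k ≤ n) :
    ∃ x ≠ 0, #{i | (x ᵥ* G) i ≠ 0} ≤ n - k + 1 := by
  let ι : Fin (k - 1) → Fin n := Fin.castLE (by omega)
  have hker : LinearMap.ker (G.submatrix id ι).vecMulLinear ≠ ⊥ :=
    LinearMap.ker_ne_bot_of_finrank_lt (by simp; omega)
  obtain ⟨x, hx, hx0⟩ := (Submodule.ne_bot_iff _).1 hker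
  refine ⟨x, hx0, ?_⟩
  have hsupport : ({i | (x ᵥ* G) i ≠ 0} : Finset (Fin n)) ⊆ (univ.image ι)ᶜ := by
    intro i hi
    simp only [mem_filter, mem_univ, true_and] at hi
    simp only [mem_compl, mem_image, mem_univ, true_and, not_exists]
    rintro j rfl
    exact hi (congrFun hx j)
  calc #{i | (x ᵥ* G) i ≠ 0} ≤ #(univ.image ι)ᶜ := card_le_card hsupport
    _ = n - k + 1 := by
      rw [card_compl, card_image_of_injective _ (Fin.castLE_injective _)]
      simp only [Fintype.card_fin, card_univ]
      omega

section RankQ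

variable (Fq : Type) {K : Type} [Field Fq] [Field K] [Algebra Fq K] {k n : ℕ}

theorem rankQ_add_finrank_ker (c : Fin n → K) :
    rankQ Fq c + finrank Fq (LinearMap.ker (Fintype.linearCombination Fq c)) = n := by
  have h := LinearMap.finrank_range_add_finrank_ker (Fintype.linearCombination Fq c)
  rwa [Fintype.range_linearCombination, finrank_fin_fun] at h

theorem rankQ_le_sub_iff (c : Fin n → K) (hkn : k ≤ n) :
    rankQ Fq c ≤ n - k ↔ ∃ y : Fin k → Fin n → Fq,
      LinearIndependent Fq y ∧ ∀ j, Fintype.linearCombination Fq c (y j) = 0 := by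
  simp_rw [← LinearMap.mem_ker]
  rw [← Submodule.le_finrank_iff_exists_linearIndependent]
  have := rankQ_add_finrank_ker Fq c
  omega

theorem rankQ_le_card_support [DecidableEq K] (c : Fin n → K) :
    rankQ Fq c ≤ #{i | c i ≠ 0} := by
  let s : Finset K := image c {i | c i ≠ 0}
  have hspan : Submodule.span Fq (Set.range c) ≤ Submodule.span Fq s := by
    refine Submodule.span_le.2 ?_
    rintro _ ⟨i, rfl⟩
    by_cases hi : c i = 0
    · simp [hi]
    · exact Submodule.subset_span (mem_image_of_mem c (by simpa using hi))
  calc rankQ Fq c ≤ Set.finrank Fq (s : Set K) := Submodule.finrank_mono hspan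
    _ ≤ #s := finrank_span_finset_le_card s
    _ ≤ #{i | c i ≠ 0} := card_image_le

theorem exists_ne_zero_rankQ_vecMul_le (G : Matrix (Fin k) (Fin n) K) (hk : 1 ≤ k)
    (hkn : k ≤ n) : ∃ x ≠ 0, rankQ Fq (x ᵥ* G) ≤ n - k + 1 := by
  classical
  obtain ⟨x, hx, hweight⟩ := G.exists_ne_zero_card_support_vecMul_le hk hkn
  exact ⟨x, hx, (rankQ_le_card_support Fq _).trans hweight⟩

theorem exists_det_submatrix_mul_map_eq_zero_iff (G : Matrix (Fin k) (Fin n) K) (hkn : k ≤ n) :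
    (∃ A : Matrix (Fin n) (Fin n) Fq, IsUnit A.det ∧ ∃ φ : Fin k → Fin n,
        Function.Injective φ ∧ ((G * A.map (algebraMap Fq K)).submatrix id φ).det = 0) ↔
      ∃ x ≠ 0, rankQ Fq (x ᵥ* G) ≤ n - k := by
  have hkernel (x : Fin k → K) (A : Matrix (Fin n) (Fin n) Fq) (φ : Fin k → Fin n) :
      x ᵥ* (G * A.map (algebraMap Fq K)).submatrix id φ = 0 ↔
        ∀ j, Fintype.linearCombination Fq (x ᵥ* G) (Aᵀ (φ j)) = 0 := by
    simp only [funext_iff, ← Matrix.vecMul_map_algebraMap_apply, Matrix.vecMul_vecMul]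
    rfl
  simp_rw [rankQ_le_sub_iff Fq _ hkn, ← Matrix.exists_vecMul_eq_zero_iff, hkernel]
  constructor
  · rintro ⟨A, hA, φ, hφ, x, hx, hxA⟩
    have hrows : LinearIndependent Fq Aᵀ := Matrix.linearIndependent_rows_iff_isUnit.2
      ((Matrix.isUnit_transpose A).2 ((Matrix.isUnit_iff_isUnit_det A).2 hA))
    exact ⟨x, hx, Aᵀ ∘ φ, hrows.comp φ hφ, hxA⟩
  · rintro ⟨x, hx, y, hy, hxy⟩
    obtain ⟨A, hA, φ, hφ, hAy⟩ := exists_isUnit_det_transpose_comp_eq y hy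
    exact ⟨A, hA, φ, hφ, x, hx, by simpa only [hAy] using hxy⟩

end RankQ

theorem IsGenMat.finrank_eq {K : Type} [Field K] {k n : ℕ} {C : Submodule K (Fin n → K)}
    {G : Matrix (Fin k) (Fin n) K} (hG : IsGenMat C G) : finrank K C = k := by
  rw [← hG.2, finrank_span_eq_card hG.1, Fintype.card_fin]

theorem IsGenMat.image_vecMul {K : Type} [Field K] {k n : ℕ} {C : Submodule K (Fin n → K)}
    {G : Matrix (Fin k) (Fin n) K} (hG : IsGenMat C G) :
    (· ᵥ* G) '' {x | x ≠ 0} = {c | c ∈ C ∧ c ≠ 0} := by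
  have hrange : LinearMap.range G.vecMulLinear = C := (range_vecMulLinear G).trans hG.2
  have hinj : Function.Injective G.vecMul := Matrix.vecMul_injective_iff.2 hG.1
  ext c
  constructor
  · rintro ⟨x, hx, rfl⟩
    exact ⟨hrange ▸ ⟨x, rfl⟩, fun h => hx (hinj (h.trans (Matrix.zero_vecMul G).symm))⟩
  · rintro ⟨hc, hc0⟩
    obtain ⟨x, rfl⟩ := hrange ▸ hc
    exact ⟨x, fun hx => hc0 (by simp [hx]), rfl⟩

theorem stmt2_general {n k : ℕ} (Fq K : Type) [Field Fq] [Field K] [Algebra Fq K]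
    (hk : 1 ≤ k) (hkn : k ≤ n)
    (C : Submodule K (Fin n → K)) (G : Matrix (Fin k) (Fin n) K) (hG : IsGenMat C G) :
    IsMRD Fq C k ↔
      ∀ A : Matrix (Fin n) (Fin n) Fq, IsUnit A.det →
        ∀ φ : Fin k → Fin n, Function.Injective φ →
          ((G * A.map (algebraMap Fq K)).submatrix id φ).det ≠ 0 := by
  have hminors := (exists_det_submatrix_mul_map_eq_zero_iff Fq G hkn).not
  push Not at hminors
  rw [hminors, IsMRD, minRankDist, ← hG.image_vecMul, Set.image_image,
    Nat.sInf_image_eq_add_one_iff (s := {x | x ≠ 0}) (exists_ne_zero_rankQ_vecMul_le Fq G hk hkn)]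
  simp only [hG.finrank_eq, true_and, Set.mem_ofPred_eq]

/-- `C` is MRD iff for every invertible `n × n` matrix `A` over `F_q`,
every maximal minor of `G * A` is non-zero. -/
theorem stmt2 {q m n k : ℕ} (Fq K : Type) [Field Fq] [Fintype Fq] [Field K] [Fintype K]
    [Algebra Fq K] (hq : Fintype.card Fq = q) (hK : Fintype.card K = q ^ m)
    (hk : 1 ≤ k) (hkn : k ≤ n)
    (C : Submodule K (Fin n → K)) (G : Matrix (Fin k) (Fin n) K) (hG : IsGenMat C G) :
    IsMRD Fq C k ↔
      ∀ A : Matrix (Fin n) (Fin n) Fq, IsUnit A.det →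
        ∀ φ : Fin k → Fin n, Function.Injective φ →
          ((G * A.map (algebraMap Fq K)).submatrix id φ).det ≠ 0 :=
  stmt2_general Fq K hk hkn C G hG
end

section
/- Let s be a positive integer with gcd(s, m) = 1, and let C ⊆ F_{q^m}^n be a linear rank-metric code of dimension k ≥ 2 over F_{q^m} whose minimum rank distance is at least k. If dim_{F_{q^m}}(C ∩ C^{[s]}) = k − 1, then there exist elements g_1, …, g_n ∈ F_{q^m} such that C is the F_{q^m}-span of the k Moore vectors (g_1^{[si]}, …, g_n^{[si]}) for i = 0, 1, …, k − 1. -/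
/-!
Let `σ x = x ^ q ^ s`. Since `gcd(s, m) = 1`, `σ` generates `Gal(F_{q^m}/F_q)`, so its fixed field
is `F_q`. As `C ∩ σ(C)` has codimension at most one in `C`, the subspaces
`W_i = {g | σ^l g ∈ C for all l ≤ i}` lose at most one dimension at each step, so `W_{k-1}`
contains some `g ≠ 0`, whose Moore vectors `σ^0 g, …, σ^(k-1) g` all lie in `C`. They are
linearly independent: a relation among them is a σ-linearized operator `∑_{i ≤ t} aᵢ σⁱ` with
`a_t ≠ 0` and `t < k` that kills the `F_q`-span of the entries of `g`, of dimension `≥ k` by the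
distance bound, whereas the kernel of such an operator has dimension at most `t`: precomposing it
with multiplication by a root `v` produces an operator of the same degree vanishing at `1`, which
factors as `M ∘ (σ - 1)` with `M` of degree `t - 1`, and `ker (σ - 1) = F_q`.
-/

open Matrix

open Module

theorem FiniteField.mem_range_algebraMap_of_pow_card_pow_eq {F K : Type*} [Field F] [Fintype F]
    [Field K] [Finite K] [Algebra F K] {s : ℕ} (hs : s.Coprime (finrank F K)) {x : K}
    (hx : x ^ Fintype.card F ^ s = x) : x ∈ Set.range (algebraMap F K) := by
  have : FiniteDimensional F K := .of_finite
  have hφ : (frobeniusAlgEquivOfAlgebraic F K ^ s) x = x := by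
    rwa [AlgEquiv.coe_pow, coe_frobeniusAlgEquivOfAlgebraic_iterate]
  obtain ⟨b, hb⟩ := exists_pow_eq_self_of_coprime
    ((orderOf_frobeniusAlgEquivOfAlgebraic F K).symm ▸ hs)
  rw [IsGalois.mem_range_algebraMap_iff_fixed]
  intro f
  obtain ⟨i, rfl⟩ := (bijective_frobeniusAlgEquivOfAlgebraic_pow F K).2 f
  show (frobeniusAlgEquivOfAlgebraic F K ^ (i : ℕ)) x = x
  rw [← hb, ← pow_mul, AlgEquiv.coe_pow]
  exact Function.iterate_fixed hφ _

theorem LinearMap.finrank_ker_comp_le {R V₁ V₂ V₃ : Type*} [DivisionRing R] [AddCommGroup V₁]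
    [Module R V₁] [AddCommGroup V₂] [Module R V₂] [AddCommGroup V₃] [Module R V₃]
    [FiniteDimensional R V₁] [FiniteDimensional R V₂] (f : V₂ →ₗ[R] V₃) (g : V₁ →ₗ[R] V₂) :
    finrank R (ker (f ∘ₗ g)) ≤ finrank R (ker f) + finrank R (ker g) := by
  set h := g.domRestrict (ker (f ∘ₗ g))
  have hrange : finrank R (range h) ≤ finrank R (ker f) := by
    refine Submodule.finrank_mono ?_
    rintro _ ⟨⟨x, hx⟩, rfl⟩
    exact hx
  have hker : finrank R (ker h) ≤ finrank R (ker g) := by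
    rw [← Submodule.finrank_map_subtype_eq]
    refine Submodule.finrank_mono ?_
    rintro _ ⟨x, hx, rfl⟩
    exact hx
  have := h.finrank_range_add_finrank_ker
  omega

namespace AlgHom
variable {F K : Type*} [Field F] [Field K] [Algebra F K] (σ : K →ₐ[F] K)

/-- The operators `∑_{i<t} aᵢ σⁱ` with `aᵢ ∈ K`, i.e. the `σ`-linearized polynomials of
degree `< t`, acting `F`-linearly on `K`. -/
def linearizedLT (t : ℕ) : Submodule K (Module.End F K) :=
  Submodule.span K ((fun i => toEnd (σ ^ i)) '' Set.Iio t)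

variable {σ}

theorem linearizedLT_zero : σ.linearizedLT 0 = ⊥ := by
  simp [linearizedLT]

theorem mem_linearizedLT_succ {t : ℕ} {L : Module.End F K} :
    L ∈ σ.linearizedLT (t + 1) ↔ ∃ a : K, ∃ L₀ ∈ σ.linearizedLT t, L = a • toEnd (σ ^ t) + L₀ := by
  rw [linearizedLT, Set.Iio_add_one_eq_Iic, ← Set.Iio_insert, Set.image_insert_eq,
    Submodule.mem_span_insert]
  rfl

theorem toEnd_mul_mulLeft (φ : K →ₐ[F] K) (v : K) :
    toEnd φ * LinearMap.mulLeft F v = φ v • toEnd φ := by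
  ext x
  simp

theorem mul_mulLeft_mem_linearizedLT {t : ℕ} {L : Module.End F K} (hL : L ∈ σ.linearizedLT t)
    (v : K) : L * LinearMap.mulLeft F v ∈ σ.linearizedLT t := by
  induction hL using Submodule.span_induction with
  | mem x hx =>
    obtain ⟨i, hi, rfl⟩ := hx
    rw [toEnd_mul_mulLeft]
    exact Submodule.smul_mem _ _ (Submodule.subset_span ⟨i, hi, rfl⟩)
  | zero => simp
  | add x y _ _ hx hy => rw [add_mul]; exact add_mem hx hy
  | smul a x _ hx => rw [smul_mul_assoc]; exact Submodule.smul_mem _ a hx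

theorem toEnd_pow_apply_one (i : ℕ) : toEnd (σ ^ i) 1 = 1 := map_one (σ ^ i)

theorem smul_toEnd_pow_mul_sub_one (a : K) (t : ℕ) :
    (a • toEnd (σ ^ t)) * (toEnd σ - 1) = a • toEnd (σ ^ (t + 1)) - a • toEnd (σ ^ t) := by
  rw [smul_mul_assoc, mul_sub, mul_one, ← map_mul, ← pow_succ, smul_sub]

theorem exists_smul_toEnd_pow_add_mul_sub_one {t : ℕ} (a : K) {L₀ : Module.End F K}
    (hL₀ : L₀ ∈ σ.linearizedLT (t + 1)) (hone : (a • toEnd (σ ^ (t + 1)) + L₀) 1 = 0) :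
    ∃ M₀ ∈ σ.linearizedLT t,
      a • toEnd (σ ^ (t + 1)) + L₀ = (a • toEnd (σ ^ t) + M₀) * (toEnd σ - 1) := by
  induction t generalizing a L₀ with
  | zero =>
    obtain ⟨b, L₁, hL₁, rfl⟩ := mem_linearizedLT_succ.1 hL₀
    rw [linearizedLT_zero, Submodule.mem_bot] at hL₁
    subst hL₁
    have hb : b = -a := by
      simpa [toEnd_pow_apply_one, add_eq_zero_iff_eq_neg'] using hone
    refine ⟨0, zero_mem _, ?_⟩
    rw [add_zero, add_zero, smul_toEnd_pow_mul_sub_one, hb]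
    module
  | succ t ih =>
    obtain ⟨b, L₁, hL₁, rfl⟩ := mem_linearizedLT_succ.1 hL₀
    have hone' : ((a + b) • toEnd (σ ^ (t + 1)) + L₁) 1 = 0 := by
      simpa [toEnd_pow_apply_one, add_mul, add_assoc] using hone
    obtain ⟨M₁, hM₁, hfac⟩ := ih (a + b) hL₁ hone'
    refine ⟨(a + b) • toEnd (σ ^ t) + M₁, mem_linearizedLT_succ.2 ⟨_, _, hM₁, rfl⟩, ?_⟩
    rw [add_assoc, add_mul, ← hfac, smul_toEnd_pow_mul_sub_one, add_smul]
    module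

theorem finrank_ker_toEnd_sub_one_le (hfix : ∀ x, σ x = x → x ∈ Set.range (algebraMap F K)) :
    finrank F (LinearMap.ker (toEnd σ - 1)) ≤ 1 := by
  have hker : LinearMap.ker (toEnd σ - 1) ≤ Submodule.span F {1} := by
    intro x hx
    obtain ⟨c, rfl⟩ := hfix x (sub_eq_zero.1 hx)
    rw [Algebra.algebraMap_eq_smul_one]
    exact Submodule.smul_mem _ c (Submodule.mem_span_singleton_self 1)
  exact (Submodule.finrank_mono hker).trans (finrank_span_singleton one_ne_zero).le

theorem finrank_ker_smul_toEnd_pow_add_le [FiniteDimensional F K]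
    (hfix : ∀ x, σ x = x → x ∈ Set.range (algebraMap F K)) {t : ℕ} {a : K} (ha : a ≠ 0)
    {L₀ : Module.End F K} (hL₀ : L₀ ∈ σ.linearizedLT t) :
    finrank F (LinearMap.ker (a • toEnd (σ ^ t) + L₀)) ≤ t := by
  induction t generalizing a L₀ with
  | zero =>
    rw [linearizedLT_zero, Submodule.mem_bot] at hL₀
    subst hL₀
    have : LinearMap.ker (a • toEnd (σ ^ 0) + 0) = ⊥ :=
      LinearMap.ker_eq_bot'.2 fun x hx => by simpa [ha] using hx
    rw [this, finrank_bot]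
  | succ t ih =>
    set L := a • toEnd (σ ^ (t + 1)) + L₀
    by_cases hL : LinearMap.ker L = ⊥
    · rw [hL, finrank_bot]
      exact (t + 1).zero_le
    obtain ⟨v, hv, hv0⟩ := (Submodule.ne_bot_iff _).1 hL
    have hL' : L * LinearMap.mulLeft F v
        = (a * (σ ^ (t + 1)) v) • toEnd (σ ^ (t + 1)) + L₀ * LinearMap.mulLeft F v := by
      rw [add_mul, smul_mul_assoc, toEnd_mul_mulLeft, smul_smul]
    have hker : LinearMap.ker L ≤ (LinearMap.ker (L * LinearMap.mulLeft F v)).map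
        (LinearMap.mulLeft F v) := by
      intro x hx
      refine ⟨v⁻¹ * x, ?_, by simp [hv0]⟩
      simpa [hv0] using hx
    have hone : (L * LinearMap.mulLeft F v) 1 = 0 := by simpa using hv
    rw [hL'] at hone
    obtain ⟨M₀, hM₀, hfac⟩ :=
      exists_smul_toEnd_pow_add_mul_sub_one _ (mul_mulLeft_mem_linearizedLT hL₀ v) hone
    have ha' : a * (σ ^ (t + 1)) v ≠ 0 := mul_ne_zero ha ((map_ne_zero _).2 hv0)
    calc finrank F (LinearMap.ker L)
        ≤ finrank F (LinearMap.ker (L * LinearMap.mulLeft F v)) :=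
          (Submodule.finrank_mono hker).trans (Submodule.finrank_map_le _ _)
      _ ≤ finrank F (LinearMap.ker ((a * (σ ^ (t + 1)) v) • toEnd (σ ^ t) + M₀))
            + finrank F (LinearMap.ker (toEnd σ - 1)) := by
          rw [hL', hfac]
          exact LinearMap.finrank_ker_comp_le _ _
      _ ≤ t + 1 := add_le_add (ih ha' hM₀) (finrank_ker_toEnd_sub_one_le hfix)

theorem linearIndependent_moore [FiniteDimensional F K]
    (hfix : ∀ x, σ x = x → x ∈ Set.range (algebraMap F K)) {ι : Type*} (g : ι → K) {k : ℕ}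
    (hk : k ≤ finrank F (Submodule.span F (Set.range g))) :
    LinearIndependent K (fun i : Fin k => fun j => (σ ^ (i : ℕ)) (g j)) := by
  induction k with
  | zero => exact linearIndependent_empty_type
  | succ k ih =>
    refine linearIndependent_finSucc'.2 ⟨ih (k.le_succ.trans hk), fun hmem => ?_⟩
    obtain ⟨c, hc⟩ := (Submodule.mem_span_range_iff_exists_fun K).1 hmem
    set L₀ := -∑ i : Fin k, c i • toEnd (σ ^ (i : ℕ))
    have hL₀ : L₀ ∈ σ.linearizedLT k := Submodule.neg_mem _ <| Submodule.sum_mem _ fun i _ =>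
      Submodule.smul_mem _ _ (Submodule.subset_span ⟨i, i.isLt, rfl⟩)
    have hspan : Submodule.span F (Set.range g) ≤ LinearMap.ker ((1 : K) • toEnd (σ ^ k) + L₀) := by
      rw [Submodule.span_le]
      rintro _ ⟨j, rfl⟩
      simpa [L₀, Finset.sum_apply, Fin.init, ← sub_eq_add_neg, sub_eq_zero]
        using (congrFun hc j).symm
    have := (Submodule.finrank_mono hspan).trans
      (finrank_ker_smul_toEnd_pow_add_le hfix one_ne_zero hL₀)
    omega

end AlgHom

section Semilinear
variable {K : Type*} [Field K]

def RingHom.piSemilinearMap (τ : K →+* K) (ι : Type*) : (ι → K) →ₛₗ[τ] (ι → K) where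
  toFun v j := τ (v j)
  map_add' _ _ := funext fun _ => map_add τ _ _
  map_smul' _ _ := funext fun _ => map_mul τ _ _

variable {τ : K →+* K}

theorem RingHom.piSemilinearMap_iterate_apply (ι : Type*) (l : ℕ) (v : ι → K) :
    (τ.piSemilinearMap ι)^[l] v = fun j => τ^[l] (v j) := by
  induction l with
  | zero => rfl
  | succ l ih =>
    rw [Function.iterate_succ_apply', ih]
    exact funext fun j => (Function.iterate_succ_apply' τ l (v j)).symm

theorem RingHom.piSemilinearMap_bijective [RingHomSurjective τ] (ι : Type*) :
    Function.Bijective (τ.piSemilinearMap ι) :=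
  ⟨τ.injective.comp_left, τ.surjective.comp_left⟩

variable [RingHomSurjective τ] {V₁ V₂ : Type*} [AddCommGroup V₁] [Module K V₁] [AddCommGroup V₂]
  [Module K V₂]

theorem Submodule.finrank_map_of_injective_semilinear {f : V₁ →ₛₗ[τ] V₂}
    (hf : Function.Injective f) (p : Submodule K V₁) : finrank K (p.map f) = finrank K p := by
  let e : p ≃+ p.map f :=
    { Equiv.Set.image f p hf with map_add' := fun x y => Subtype.ext (map_add f (x : V₁) y) }
  simpa [finrank] using congr_arg Cardinal.toNat
    (lift_rank_eq_of_equiv_equiv (M := p) (M' := p.map f) τ e ⟨τ.injective, τ.surjective⟩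
      fun r x => Subtype.ext (map_smulₛₗ f r (x : V₁))).symm

end Semilinear

namespace Submodule
variable {K V : Type*} [Field K] [AddCommGroup V] [Module K V] {τ : K →+* K}
  (f : V →ₛₗ[τ] V) (C : Submodule K V)

/-- `iterInfComap f C i = {x | ∀ l ≤ i, f^[l] x ∈ C}`. -/
def iterInfComap : ℕ → Submodule K V
  | 0 => C
  | i + 1 => C ⊓ (iterInfComap i).comap f

variable {f C}

theorem iterInfComap_le (i : ℕ) : iterInfComap f C i ≤ C := by
  cases i with
  | zero => exact le_rfl
  | succ i => exact inf_le_left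

theorem iterate_mem_of_mem_iterInfComap {i : ℕ} {x : V} (hx : x ∈ iterInfComap f C i) :
    ∀ l ≤ i, f^[l] x ∈ C := by
  induction i generalizing x with
  | zero =>
    intro l hl
    rw [Nat.le_zero.1 hl]
    exact hx
  | succ i ih =>
    rintro (_ | l) hl
    · exact hx.1
    · exact ih hx.2 l (Nat.le_of_succ_le_succ hl)

variable [RingHomSurjective τ] [FiniteDimensional K V]

theorem finrank_le_finrank_iterInfComap_add (hf : Function.Bijective f)
    (hcodim : finrank K C ≤ finrank K (C ⊓ C.map f : Submodule K V) + 1) (i : ℕ) :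
    finrank K C ≤ finrank K (iterInfComap f C i) + i := by
  have hcomap (W : Submodule K V) : finrank K (W.comap f) = finrank K W := by
    rw [← finrank_map_of_injective_semilinear hf.1, map_comap_eq_of_surjective hf.2]
  have hinf : finrank K (C ⊓ C.comap f : Submodule K V)
      = finrank K (C ⊓ C.map f : Submodule K V) := by
    rw [← finrank_map_of_injective_semilinear hf.1, map_inf _ hf.1,
      map_comap_eq_of_surjective hf.2, inf_comm]
  have hsup := finrank_sup_add_finrank_inf_eq C (C.comap f)
  induction i with
  | zero => exact le_rfl
  | succ i ih =>
    have hle : finrank K (C ⊔ (iterInfComap f C i).comap f : Submodule K V)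
        ≤ finrank K (C ⊔ C.comap f : Submodule K V) :=
      finrank_mono (sup_le_sup_left (comap_mono (iterInfComap_le i)) C)
    have := finrank_sup_add_finrank_inf_eq C ((iterInfComap f C i).comap f)
    rw [hcomap] at this hsup
    change finrank K C ≤ finrank K (C ⊓ (iterInfComap f C i).comap f : Submodule K V) + (i + 1)
    omega

theorem exists_ne_zero_forall_iterate_mem (hf : Function.Bijective f)
    (hcodim : finrank K C ≤ finrank K (C ⊓ C.map f : Submodule K V) + 1) (hpos : 0 < finrank K C) :
    ∃ x ≠ 0, ∀ l < finrank K C, f^[l] x ∈ C := by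
  have := finrank_le_finrank_iterInfComap_add hf hcodim (finrank K C - 1)
  have hne : iterInfComap f C (finrank K C - 1) ≠ ⊥ := fun h => by
    rw [h, finrank_bot] at this
    omega
  obtain ⟨x, hx, hx0⟩ := (Submodule.ne_bot_iff _).1 hne
  exact ⟨x, hx0, fun l hl => iterate_mem_of_mem_iterInfComap hx l (by omega)⟩

end Submodule

theorem Submodule.exists_eq_span_moore {F K ι : Type*} [Field F] [Field K] [Algebra F K]
    [FiniteDimensional F K] [Fintype ι] {σ : K →ₐ[F] K}
    (hfix : ∀ x, σ x = x → x ∈ Set.range (algebraMap F K)) {C : Submodule K (ι → K)}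
    (hpos : 0 < finrank K C)
    (hdist : ∀ c ∈ C, c ≠ 0 → finrank K C ≤ finrank F (span F (Set.range c)))
    (hcodim : finrank K C
      ≤ finrank K (C ⊓ span K ((fun (v : ι → K) j => σ (v j)) '' C) : Submodule K _) + 1) :
    ∃ g : ι → K,
      C = span K (Set.range fun i : Fin (finrank K C) => fun j => (σ ^ (i : ℕ)) (g j)) := by
  have : RingHomSurjective (σ : K →+* K) := ⟨σ.bijective.2⟩
  set f := (σ : K →+* K).piSemilinearMap ι
  obtain ⟨g, hg0, hgC⟩ := exists_ne_zero_forall_iterate_mem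
    (RingHom.piSemilinearMap_bijective ι) (span_eq (C.map f) ▸ hcodim) hpos
  have hli := σ.linearIndependent_moore hfix g (hdist g (hgC 0 hpos) hg0)
  refine ⟨g, (eq_of_le_of_finrank_eq (span_le.2 ?_) ?_).symm⟩
  · rintro _ ⟨i, rfl⟩
    simpa [f, RingHom.piSemilinearMap_iterate_apply] using hgC i i.isLt
  · rw [finrank_span_eq_card hli, Fintype.card_fin]

theorem stmt8_general {q m s n k : ℕ} (Fq K : Type) [Field Fq] [Fintype Fq] [Field K] [Fintype K]
    [Algebra Fq K] (hq : Fintype.card Fq = q) (hK : Fintype.card K = q ^ m)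
    (hgcd : Nat.gcd s m = 1)
    (C : Submodule K (Fin n → K)) (hk : 2 ≤ k) (hdim : Module.finrank K C = k)
    (hdist : ∀ c ∈ C, c ≠ 0 → k ≤ rankQ Fq c)
    (hint : Module.finrank K
        (C ⊓ Submodule.span K
          ((fun v : Fin n → K => fun j => (v j) ^ q ^ s) '' (C : Set (Fin n → K))) :
        Submodule K (Fin n → K)) = k - 1) :
    ∃ g : Fin n → K,
      C = Submodule.span K
        (Set.range fun i : Fin k => fun j : Fin n => (g j) ^ q ^ (s * (i : ℕ))) := by
  subst hdim
  have hm : finrank Fq K = m := by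
    have h := Module.card_eq_pow_finrank (K := Fq) (V := K)
    rw [hK, hq] at h
    exact Nat.pow_right_injective (hq ▸ Fintype.one_lt_card) h.symm
  set σ := FiniteField.frobeniusAlgHom Fq K ^ s
  have hσ : ⇑σ = fun x : K => x ^ q ^ s := by
    rw [AlgHom.coe_pow, FiniteField.coe_frobeniusAlgHom, pow_iterate, hq]
  have hfix (x : K) (hx : σ x = x) : x ∈ Set.range (algebraMap Fq K) :=
    FiniteField.mem_range_algebraMap_of_pow_card_pow_eq (hm ▸ hgcd) (by rwa [hq, ← congrFun hσ])
  obtain ⟨g, hg⟩ := Submodule.exists_eq_span_moore hfix (by omega) hdist (by rw [hσ, hint]; omega)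
  refine ⟨g, hg.trans ?_⟩
  simp only [AlgHom.coe_pow, hσ, pow_iterate, ← pow_mul]

/-- if `C` has dimension `k ≥ 2`, minimum rank distance at least `k`,
and `dim(C ∩ C^[s]) = k - 1`, then `C` is spanned by `k` Moore vectors. -/
theorem stmt8 {q m s n k : ℕ} (Fq K : Type) [Field Fq] [Fintype Fq] [Field K] [Fintype K]
    [Algebra Fq K] (hq : Fintype.card Fq = q) (hK : Fintype.card K = q ^ m)
    (hs : 0 < s) (hgcd : Nat.gcd s m = 1)
    (C : Submodule K (Fin n → K)) (hk : 2 ≤ k) (hdim : Module.finrank K C = k)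
    (hdist : ∀ c ∈ C, c ≠ 0 → k ≤ rankQ Fq c)
    (hint : Module.finrank K
        (C ⊓ Submodule.span K
          ((fun v : Fin n → K => fun j => (v j) ^ q ^ s) '' (C : Set (Fin n → K))) :
        Submodule K (Fin n → K)) = k - 1) :
    ∃ g : Fin n → K,
      C = Submodule.span K
        (Set.range fun i : Fin k => fun j : Fin n => (g j) ^ q ^ (s * (i : ℕ))) :=
  stmt8_general Fq K hq hK hgcd C hk hdim hdist hint
end

section
/- Let s be a positive integer with gcd(s, m) = 1, let 1 ≤ k < n, let g_1, …, g_n ∈ F_{q^m} be linearly independent over F_q, and let C ⊆ F_{q^m}^n be the generalized Gabidulin code with parameter s, i.e., the F_{q^m}-span of the Moore vectors (g_1^{[si]}, …, g_n^{[si]}) for i = 0, …, k − 1. Then dim_{F_{q^m}}(C ∩ C^{[s]}) = k − 1. -/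
open Matrix

/-!
Let `σ x = x ^ q ^ s`. Since `gcd(s, m) = 1`, a point fixed by `σ` is fixed by the `q`-Frobenius,
so the fixed field of `σ` is `F_q`. This makes the Moore vectors `V i = σ^i(g)`, `i ≤ k < n`,
linearly independent over `F_{q^m}`: a relation `∑ aᵢ σ^i` with top coefficient `a_d ≠ 0` cannot
vanish on `d + 1` elements independent over `F_q`, by induction on `d` (rescale so that one element
is `1`; then `∑ aᵢ σ^i = (∑ cᵢ σ^i) ∘ (σ - 1)` with `σ - 1` injective modulo `F_q`).
Now `C` is spanned by `V 0, …, V (k-1)` and, `σ` being semilinear, `C^[s]` by `V 1, …, V k`;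
their sum has dimension `k + 1`, so their intersection has dimension `k + k - (k + 1)`.
-/

open Finset

theorem FiniteField.mem_range_algebraMap_of_frobeniusAlgHom_pow_apply_eq
    {F K : Type*} [Field F] [Fintype F] [Field K] [Finite K] [Algebra F K] {s : ℕ}
    (hs : s.Coprime (Module.finrank F K)) {x : K} (hx : (frobeniusAlgHom F K ^ s) x = x) :
    x ∈ Set.range (algebraMap F K) := by
  have hs' : Function.IsPeriodicPt (frobeniusAlgHom F K) s x := by
    rwa [Function.IsPeriodicPt, Function.IsFixedPt, ← AlgHom.coe_pow]
  have hm : Function.IsPeriodicPt (frobeniusAlgHom F K) (Module.finrank F K) x := by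
    rw [Function.IsPeriodicPt, Function.IsFixedPt, ← AlgHom.coe_pow, ← orderOf_frobeniusAlgHom,
      pow_orderOf_eq_one, AlgHom.one_apply]
  have hfrob : Function.IsPeriodicPt (frobeniusAlgHom F K) 1 x := hs.gcd_eq_one ▸ hs'.gcd hm
  rw [IsGalois.mem_range_algebraMap_iff_fixed]
  intro f
  obtain ⟨i, rfl⟩ := (bijective_frobeniusAlgEquivOfAlgebraic_pow F K).2 f
  rw [AlgEquiv.coe_pow]
  exact Function.iterate_fixed hfrob i

def RingHom.compLeftSemilinear {R : Type*} [CommSemiring R] (τ : R →+* R) (ι : Type*) :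
    (ι → R) →ₛₗ[τ] (ι → R) where
  toFun v := τ ∘ v
  map_add' _ _ := funext fun _ => map_add τ _ _
  map_smul' _ _ := funext fun _ => map_mul τ _ _

theorem Submodule.span_image_span {R R₂ M M₂ : Type*} [Semiring R] [Semiring R₂] [AddCommMonoid M]
    [Module R M] [AddCommMonoid M₂] [Module R₂ M₂] {τ : R →+* R₂} (f : M →ₛₗ[τ] M₂) (s : Set M) :
    span R₂ (f '' span R s) = span R₂ (f '' s) :=
  le_antisymm (span_le.2 (image_span_subset_span f s)) (span_mono (Set.image_mono subset_span))

theorem finrank_span_inf_span_succ {K M : Type*} [Field K] [AddCommGroup M] [Module K M]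
    {k : ℕ} (hk : 1 ≤ k) (V : ℕ → M) (hV : LinearIndependent K fun i : Fin (k + 1) => V i) :
    Module.finrank K (Submodule.span K (Set.range fun i : Fin k => V i) ⊓
      Submodule.span K (Set.range fun i : Fin k => V (i + 1)) : Submodule K M) = k - 1 := by
  have hsup : Submodule.span K (Set.range fun i : Fin k => V i) ⊔
      Submodule.span K (Set.range fun i : Fin k => V (i + 1)) =
      Submodule.span K (Set.range fun i : Fin (k + 1) => V i) := by
    rw [← Submodule.span_union]
    congr 1
    ext x
    simp only [Set.mem_union, Set.mem_range]
    constructor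
    · rintro (⟨i, rfl⟩ | ⟨i, rfl⟩)
      exacts [⟨i.castSucc, rfl⟩, ⟨i.succ, rfl⟩]
    · rintro ⟨i, rfl⟩
      rcases Nat.lt_or_ge (i : ℕ) k with hi | hi
      · exact Or.inl ⟨⟨i, hi⟩, rfl⟩
      · exact Or.inr ⟨⟨i - 1, by omega⟩, show V (i - 1 + 1) = V i by congr 1; omega⟩
  have hC : Module.finrank K (Submodule.span K (Set.range fun i : Fin k => V i)) = k := by
    have hli : LinearIndependent K fun i : Fin k => V i := hV.comp _ (Fin.castSucc_injective k)
    simpa using finrank_span_eq_card hli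
  have hD : Module.finrank K (Submodule.span K (Set.range fun i : Fin k => V (i + 1))) = k := by
    have hli : LinearIndependent K fun i : Fin k => V (i + 1) := hV.comp _ (Fin.succ_injective k)
    simpa using finrank_span_eq_card hli
  have : FiniteDimensional K (Submodule.span K (Set.range fun i : Fin k => V i)) :=
    .span_of_finite K (Set.finite_range _)
  have : FiniteDimensional K (Submodule.span K (Set.range fun i : Fin k => V (i + 1))) :=
    .span_of_finite K (Set.finite_range _)
  have h := Submodule.finrank_sup_add_finrank_inf_eq
    (Submodule.span K (Set.range fun i : Fin k => V i))
    (Submodule.span K (Set.range fun i : Fin k => V (i + 1)))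
  rw [hsup, finrank_span_eq_card hV, hC, hD, Fintype.card_fin] at h
  omega

section Moore
variable {F K : Type*} [Field F] [Field K] [Algebra F K] (σ : K →ₐ[F] K)

theorem linearIndependent_apply_sub_self_succ
    (hfix : ∀ x, σ x = x → x ∈ Set.range (algebraMap F K))
    {d : ℕ} {u : Fin (d + 1) → K} (hu : LinearIndependent F u) (hu0 : u 0 = 1) :
    LinearIndependent F fun j : Fin d => σ (u j.succ) - u j.succ := by
  rw [linearIndependent_finSucc] at hu
  have hdisj : Disjoint (Submodule.span F (Set.range (Fin.tail u)))
      (LinearMap.ker (σ.toLinearMap - LinearMap.id)) := by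
    refine Submodule.disjoint_def.2 fun x hx hxσ => ?_
    obtain ⟨c, rfl⟩ := hfix x (by simpa [sub_eq_zero] using hxσ)
    by_contra hc
    refine hu.2 ?_
    rw [hu0, ← map_one (algebraMap F K), ← inv_mul_cancel₀ (a := c) (by rintro rfl; simp at hc),
      map_mul, ← Algebra.smul_def]
    exact Submodule.smul_mem _ _ hx
  exact hu.1.map hdisj

theorem exists_sum_mul_pow_apply_ne_zero
    (hfix : ∀ x, σ x = x → x ∈ Set.range (algebraMap F K))
    {d : ℕ} (a : ℕ → K) (ha : a d ≠ 0) (v : Fin (d + 1) → K) (hv : LinearIndependent F v) :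
    ∃ j, ∑ i ∈ range (d + 1), a i * (σ ^ i) (v j) ≠ 0 := by
  induction d generalizing a with
  | zero => exact ⟨0, by simpa using mul_ne_zero ha (hv.ne_zero 0)⟩
  | succ d ih =>
    by_contra! hzero
    have hv0 : v 0 ≠ 0 := hv.ne_zero 0
    set u : Fin (d + 2) → K := fun j => (v 0)⁻¹ * v j
    have hu : LinearIndependent F u := hv.map' (LinearMap.mulLeft F (v 0)⁻¹)
      (LinearMap.ker_eq_bot.2 (mul_right_injective₀ (inv_ne_zero hv0)))
    have hu0 : u 0 = 1 := inv_mul_cancel₀ hv0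
    set b : ℕ → K := fun i => a i * (σ ^ i) (v 0)
    have hbu : ∀ j, ∑ i ∈ range (d + 2), b i * (σ ^ i) (u j) = 0 := by
      intro j
      simpa only [b, u, mul_assoc, ← map_mul, mul_inv_cancel_left₀ hv0] using hzero j
    have hb : ∑ i ∈ range (d + 2), b i = 0 := by simpa [hu0] using hbu 0
    set c : ℕ → K := fun i => -∑ t ∈ range (i + 1), b t
    have hfactor : ∀ x, ∑ i ∈ range (d + 2), b i * (σ ^ i) x =
        ∑ i ∈ range (d + 1), c i * (σ ^ i) (σ x - x) := by
      intro x
      have := sum_range_by_parts (fun i => (σ ^ i) x) b (d + 2)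
      simp only [hb, smul_eq_mul, mul_zero, zero_sub, Nat.add_succ_sub_one] at this
      rw [sum_congr rfl fun i _ => mul_comm (b i) _, this, ← sum_neg_distrib]
      refine sum_congr rfl fun i _ => ?_
      rw [map_sub, pow_succ, AlgHom.mul_apply]
      ring
    have hc : c d ≠ 0 := by
      have hcd : c d = b (d + 1) := by
        rw [sum_range_succ] at hb
        linear_combination -hb
      rw [hcd]
      exact mul_ne_zero ha ((map_ne_zero _).2 hv0)
    obtain ⟨j, hj⟩ := ih c hc _ (linearIndependent_apply_sub_self_succ σ hfix hu hu0)
    exact hj (by rw [← hfactor]; exact hbu j.succ)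

theorem linearIndependent_moore (hfix : ∀ x, σ x = x → x ∈ Set.range (algebraMap F K))
    {n : ℕ} {g : Fin n → K} (hg : LinearIndependent F g) {r : ℕ} (hr : r ≤ n) :
    LinearIndependent K fun i : Fin r => fun j => (σ ^ (i : ℕ)) (g j) := by
  induction r with
  | zero => exact linearIndependent_empty_type
  | succ r ih =>
    have hsnoc : (fun i : Fin (r + 1) => fun j => (σ ^ (i : ℕ)) (g j)) =
        Fin.snoc (fun i : Fin r => fun j => (σ ^ (i : ℕ)) (g j)) fun j => (σ ^ r) (g j) := by
      funext i
      refine Fin.lastCases ?_ (fun i => ?_) i <;> simp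
    rw [hsnoc]
    refine (ih (by omega)).finSnoc fun hmem => ?_
    obtain ⟨c, hc⟩ := (Submodule.mem_span_range_iff_exists_fun K).1 hmem
    obtain ⟨j, hj⟩ := exists_sum_mul_pow_apply_ne_zero σ hfix
      (fun i => if h : i < r then c ⟨i, h⟩ else -1) (by simp)
      (g ∘ Fin.castLE hr) (hg.comp _ (Fin.castLE_injective hr))
    have hcj := congr_fun hc (Fin.castLE hr j)
    simp only [Finset.sum_apply, Pi.smul_apply, smul_eq_mul] at hcj
    apply hj
    rw [sum_range_succ, sum_range, dif_neg (lt_irrefl r)]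
    simp only [Fin.is_lt, dif_pos, Fin.eta, Function.comp_apply, hcj, neg_one_mul, add_neg_cancel]

end Moore

theorem stmt11_general {q m s n k : ℕ} (Fq K : Type) [Field Fq] [Fintype Fq] [Field K] [Fintype K]
    [Algebra Fq K] (hq : Fintype.card Fq = q) (hK : Fintype.card K = q ^ m)
    (hgcd : Nat.gcd s m = 1) (hk : 1 ≤ k) (hkn : k < n)
    (g : Fin n → K) (hg : LinearIndependent Fq g)
    (C : Submodule K (Fin n → K))
    (hC : C = Submodule.span K
      (Set.range fun i : Fin k => fun j : Fin n => (g j) ^ q ^ (s * (i : ℕ)))) :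
    Module.finrank K
        (C ⊓ Submodule.span K
          ((fun v : Fin n → K => fun j => (v j) ^ q ^ s) '' (C : Set (Fin n → K))) :
        Submodule K (Fin n → K)) = k - 1 := by
  subst hq hC
  have hm : Module.finrank Fq K = m := Nat.pow_right_injective (Fintype.one_lt_card (α := Fq))
    (by simpa only [← Module.card_eq_pow_finrank (K := Fq) (V := K)] using hK)
  set σ := FiniteField.frobeniusAlgHom Fq K ^ s
  have hσ : ∀ i (x : K), (σ ^ i) x = x ^ Fintype.card Fq ^ (s * i) := by
    intro i x
    rw [← pow_mul, AlgHom.coe_pow, FiniteField.coe_frobeniusAlgHom, pow_iterate]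
  have hfix : ∀ x, σ x = x → x ∈ Set.range (algebraMap Fq K) := fun x =>
    FiniteField.mem_range_algebraMap_of_frobeniusAlgHom_pow_apply_eq (hm ▸ hgcd)
  set V : ℕ → Fin n → K := fun i j => (σ ^ i) (g j)
  have hΦ : (fun v : Fin n → K => fun j => v j ^ Fintype.card Fq ^ s) =
      σ.toRingHom.compLeftSemilinear (Fin n) :=
    funext fun v => funext fun j => by
      show v j ^ _ = σ (v j)
      simpa using (hσ 1 (v j)).symm
  have hCV : (Set.range fun i : Fin k => fun j => g j ^ Fintype.card Fq ^ (s * i)) =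
      Set.range fun i : Fin k => V i := by
    simp only [V, hσ]
  have hshift : σ.toRingHom.compLeftSemilinear (Fin n) '' Set.range (fun i : Fin k => V i) =
      Set.range fun i : Fin k => V (i + 1) := by
    rw [← Set.range_comp]
    congr
    funext i j
    show σ ((σ ^ (i : ℕ)) (g j)) = (σ ^ ((i : ℕ) + 1)) (g j)
    rw [pow_succ', AlgHom.mul_apply]
  rw [hΦ, hCV, Submodule.span_image_span, hshift]
  exact finrank_span_inf_span_succ hk V (linearIndependent_moore σ hfix hg hkn)

/-- a generalized Gabidulin code `C` of dimension `1 ≤ k < n` with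
parameter `s` (`gcd(s,m) = 1`) satisfies `dim(C ∩ C^[s]) = k - 1`. -/
theorem stmt11 {q m s n k : ℕ} (Fq K : Type) [Field Fq] [Fintype Fq] [Field K] [Fintype K]
    [Algebra Fq K] (hq : Fintype.card Fq = q) (hK : Fintype.card K = q ^ m)
    (hs : 0 < s) (hgcd : Nat.gcd s m = 1) (hk : 1 ≤ k) (hkn : k < n)
    (g : Fin n → K) (hg : LinearIndependent Fq g)
    (C : Submodule K (Fin n → K))
    (hC : C = Submodule.span K
      (Set.range fun i : Fin k => fun j : Fin n => (g j) ^ q ^ (s * (i : ℕ)))) :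
    Module.finrank K
        (C ⊓ Submodule.span K
          ((fun v : Fin n → K => fun j => (v j) ^ q ^ s) '' (C : Set (Fin n → K))) :
        Submodule K (Fin n → K)) = k - 1 :=
  stmt11_general Fq K hq hK hgcd hk hkn g hg C hC
end

section
/- Let C ⊆ F_{q^m}^n be a linear MRD code of dimension k over F_{q^m}, where k = 1 or k = n − 1 (and 1 ≤ k ≤ n). Then C is a Gabidulin code: there exist g_1, …, g_n ∈ F_{q^m} linearly independent over F_q such that C is the F_{q^m}-span of the k Moore vectors (g_1^{q^i}, …, g_n^{q^i}) for i = 0, …, k − 1. -/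
/-!
A nonzero `q`-polynomial `L x = ∑_{i<k} c_i x^(q^i)` is `F_q`-linear with at most `q^(k-1)` roots,
so it kills a subspace of dimension `< k` of `span_{F_q} g`, and the codeword `(L g_j)_j` of the
Gabidulin code has rank `> n - k`. Hence Gabidulin codes are MRD of dimension `k`, and a code of
dimension `k` containing the first `k` Moore vectors of an `F_q`-independent `g` is the Gabidulin code.

For `k = 1` a nonzero codeword has rank `n`, i.e. it is `F_q`-independent. For `k = n - 1` write
`C = {x | ∑ x_j h_j = 0}`; minimum distance `2` forces `h` to be `F_q`-independent. A functional
`x ↦ ∑ x_j u_j` whose kernel is the Gabidulin code of `(h_j^q)` has `u` `F_q`-independent for the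
same reason, and `g = u^(q^-(n-1))` has its first `n - 1` Moore vectors in `C`.
-/

open Matrix

open Module Polynomial

section RankMetric

variable {Fq K : Type} [Field Fq] [Field K] [Algebra Fq K] {n : ℕ}

theorem rankQ_le (v : Fin n → K) : rankQ Fq v ≤ n :=
  (finrank_range_le_card (R := Fq) v).trans_eq (Fintype.card_fin n)

theorem linearIndependent_of_le_rankQ {v : Fin n → K} (hv : n ≤ rankQ Fq v) :
    LinearIndependent Fq v := by
  rw [linearIndependent_iff_card_eq_finrank_span, Fintype.card_fin]
  exact hv.antisymm (rankQ_le v)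

theorem rankQ_zero : rankQ Fq (0 : Fin n → K) = 0 := by
  rw [rankQ, Submodule.span_eq_bot.mpr (by rintro _ ⟨j, rfl⟩; rfl), finrank_bot]

theorem rankQ_algebraMap_comp_le_one (a : Fin n → Fq) : rankQ Fq (algebraMap Fq K ∘ a) ≤ 1 := by
  refine (Submodule.finrank_mono (Submodule.span_le.mpr ?_)).trans
    (finrank_span_singleton (one_ne_zero (α := K))).le
  rintro _ ⟨j, rfl⟩
  exact Submodule.mem_span_singleton.mpr ⟨a j, (Algebra.algebraMap_eq_smul_one (a j)).symm⟩

theorem minRankDist_le_rankQ {C : Submodule K (Fin n → K)} {v : Fin n → K} (hv : v ∈ C)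
    (hv0 : v ≠ 0) : minRankDist Fq C ≤ rankQ Fq v :=
  Nat.sInf_le ⟨v, ⟨hv, hv0⟩, rfl⟩

end RankMetric

section Duality

variable {K : Type} [Field K] {n : ℕ}

theorem LinearMap.apply_eq_sum_mul_apply_single {ι : Type*} [Fintype ι] [DecidableEq ι]
    (f : Module.Dual K (ι → K)) (x : ι → K) : f x = ∑ j, x j * f (Pi.single j 1) := by
  rw [LinearMap.pi_apply_eq_sum_univ f x]
  refine Finset.sum_congr rfl fun i _ => ?_
  congr 2
  ext j
  simp [Pi.single_apply, eq_comm]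

theorem Module.Dual.exists_ker_eq {V : Type*} [AddCommGroup V] [Module K V] [FiniteDimensional K V]
    (W : Submodule K V) (hW : finrank K W = finrank K V - 1) :
    ∃ f : Module.Dual K V, LinearMap.ker f = W := by
  by_cases htop : W = ⊤
  · exact ⟨0, by rw [LinearMap.ker_zero, htop]⟩
  obtain ⟨f, hf0, hWf⟩ := W.exists_le_ker_of_lt_top (lt_top_iff_ne_top.mpr htop)
  refine ⟨f, (Submodule.eq_of_le_of_finrank_le hWf ?_).symm⟩
  have := Module.Dual.finrank_ker_add_one_of_ne_zero hf0
  omega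

theorem linearIndependent_apply_single_of_two_le_rankQ {Fq : Type} [Field Fq] [Algebra Fq K]
    (f : Module.Dual K (Fin n → K))
    (hf : ∀ x ∈ LinearMap.ker f, x ≠ 0 → 2 ≤ rankQ Fq x) :
    LinearIndependent Fq fun j => f (Pi.single j 1) := by
  rw [Fintype.linearIndependent_iff]
  intro a ha
  have hker : algebraMap Fq K ∘ a ∈ LinearMap.ker f := by
    rw [LinearMap.mem_ker, LinearMap.apply_eq_sum_mul_apply_single, ← ha]
    simp [Algebra.smul_def]
  have hzero : algebraMap Fq K ∘ a = 0 := by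
    by_contra h0
    have := hf _ hker h0
    have := rankQ_algebraMap_comp_le_one (K := K) a
    omega
  intro j
  simpa using congrFun hzero j

end Duality

section Frobenius

variable (Fq : Type) {K : Type} [Field Fq] [Fintype Fq] [Field K] [Algebra Fq K]

theorem FiniteField.frobeniusAlgHom_pow_apply (t : ℕ) (x : K) :
    (FiniteField.frobeniusAlgHom Fq K ^ t) x = x ^ Fintype.card Fq ^ t := by
  rw [AlgHom.coe_pow, FiniteField.coe_frobeniusAlgHom, pow_iterate]

theorem FiniteField.frobeniusAlgEquivOfAlgebraic_pow_apply [Algebra.IsAlgebraic Fq K] (t : ℕ)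
    (x : K) : (FiniteField.frobeniusAlgEquivOfAlgebraic Fq K ^ t) x = x ^ Fintype.card Fq ^ t := by
  rw [AlgEquiv.coe_pow, FiniteField.coe_frobeniusAlgEquivOfAlgebraic_iterate]

theorem sum_mul_pow_card_pow {ι : Type*} (s : Finset ι) (x y : ι → K) (t : ℕ) :
    (∑ j ∈ s, x j * y j) ^ Fintype.card Fq ^ t =
      ∑ j ∈ s, x j ^ Fintype.card Fq ^ t * y j ^ Fintype.card Fq ^ t := by
  simp only [← FiniteField.frobeniusAlgHom_pow_apply Fq, map_sum, map_mul]

end Frobenius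

section Linearized

variable (Fq : Type) {K : Type} [Field Fq] [Fintype Fq] [Field K] {k : ℕ}

noncomputable def linearizedPoly (c : Fin k → K) : K[X] :=
  ∑ i, C (c i) * X ^ Fintype.card Fq ^ (i : ℕ)

variable {Fq}

theorem coeff_linearizedPoly (c : Fin k → K) (i : Fin k) :
    (linearizedPoly Fq c).coeff (Fintype.card Fq ^ (i : ℕ)) = c i := by
  have hinj := Nat.pow_right_injective (Fintype.one_lt_card (α := Fq))
  simp [linearizedPoly, coeff_C_mul, coeff_X_pow, hinj.eq_iff, Fin.val_inj]

theorem linearizedPoly_ne_zero {c : Fin k → K} (hc : c ≠ 0) : linearizedPoly Fq c ≠ 0 := by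
  obtain ⟨i, hi⟩ := Function.ne_iff.mp hc
  exact fun h => hi (by simpa [h] using (coeff_linearizedPoly (Fq := Fq) c i).symm)

theorem natDegree_linearizedPoly_lt (c : Fin k → K) :
    (linearizedPoly Fq c).natDegree < Fintype.card Fq ^ k := by
  have hq := Fintype.one_lt_card (α := Fq)
  rcases k.eq_zero_or_pos with rfl | hk
  · simp [linearizedPoly]
  refine (natDegree_sum_le_of_forall_le _ _ fun i _ => ?_).trans_lt
    (Nat.pow_lt_pow_right hq (Nat.sub_lt hk one_pos))
  exact (natDegree_C_mul_X_pow_le _ _).trans (Nat.pow_le_pow_right hq.le (by omega))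

variable [Algebra Fq K]

variable (Fq) in
noncomputable def linearizedPolyMap (c : Fin k → K) : K →ₗ[Fq] K :=
  ∑ i, c i • (FiniteField.frobeniusAlgHom Fq K ^ (i : ℕ)).toLinearMap

theorem linearizedPolyMap_apply (c : Fin k → K) (x : K) :
    linearizedPolyMap Fq c x = ∑ i, c i * x ^ Fintype.card Fq ^ (i : ℕ) := by
  simp only [linearizedPolyMap, LinearMap.coe_sum, Finset.sum_apply, LinearMap.smul_apply,
    AlgHom.toLinearMap_apply, FiniteField.frobeniusAlgHom_pow_apply, smul_eq_mul]

theorem eval_linearizedPoly (c : Fin k → K) (x : K) :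
    (linearizedPoly Fq c).eval x = linearizedPolyMap Fq c x := by
  simp [linearizedPoly, linearizedPolyMap_apply, eval_finsetSum]

theorem finrank_ker_linearizedPolyMap_lt [Finite K] {c : Fin k → K} (hc : c ≠ 0) :
    finrank Fq (LinearMap.ker (linearizedPolyMap Fq c)) < k := by
  have : Fintype (LinearMap.ker (linearizedPolyMap Fq c)) := Fintype.ofFinite _
  rw [← Nat.pow_lt_pow_iff_right (Fintype.one_lt_card (α := Fq)), ← card_eq_pow_finrank]
  by_contra! hcard
  refine linearizedPoly_ne_zero hc (eq_zero_of_natDegree_lt_card_of_eval_eq_zero _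
    Subtype.val_injective (fun x => ?_) ((natDegree_linearizedPoly_lt c).trans_le hcard))
  rw [eval_linearizedPoly]
  exact x.2

end Linearized

section Gabidulin

variable {Fq K : Type} [Field Fq] [Fintype Fq] [Field K] [Algebra Fq K] {n k : ℕ}

def gabidulin (q : ℕ) (g : Fin n → K) (k : ℕ) : Submodule K (Fin n → K) :=
  Submodule.span K (Set.range fun i : Fin k => fun j : Fin n => g j ^ q ^ (i : ℕ))

theorem sum_smul_moore (g : Fin n → K) (c : Fin k → K) :
    ∑ i, c i • (fun j => g j ^ Fintype.card Fq ^ (i : ℕ)) =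
      fun j => linearizedPolyMap Fq c (g j) := by
  ext j
  simp [linearizedPolyMap_apply, Finset.sum_apply]

variable [Finite K] {g : Fin n → K}

theorem lt_rankQ_linearizedPolyMap_comp_add (hg : LinearIndependent Fq g) {c : Fin k → K}
    (hc : c ≠ 0) : n < rankQ Fq (linearizedPolyMap Fq c ∘ g) + k := by
  set L := linearizedPolyMap Fq c
  set V := Submodule.span Fq (Set.range g)
  have hrank : rankQ Fq (L ∘ g) = finrank Fq (LinearMap.range (L.domRestrict V)) := by
    rw [rankQ, Set.range_comp, ← Submodule.map_span, LinearMap.range_domRestrict]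
  have hker : finrank Fq (LinearMap.ker (L.domRestrict V)) < k := by
    rw [← Submodule.finrank_map_subtype_eq]
    refine lt_of_le_of_lt (Submodule.finrank_mono ?_) (finrank_ker_linearizedPolyMap_lt hc)
    rintro _ ⟨x, hx, rfl⟩
    exact hx
  have := (L.domRestrict V).finrank_range_add_finrank_ker
  rw [finrank_span_eq_card hg, Fintype.card_fin] at this
  omega

theorem lt_rankQ_add_of_mem_gabidulin (hg : LinearIndependent Fq g) {v : Fin n → K}
    (hv : v ∈ gabidulin (Fintype.card Fq) g k) (hv0 : v ≠ 0) : n < rankQ Fq v + k := by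
  obtain ⟨c, rfl⟩ := (Submodule.mem_span_range_iff_exists_fun K).mp hv
  rw [sum_smul_moore] at hv0 ⊢
  refine lt_rankQ_linearizedPolyMap_comp_add hg fun hc => hv0 ?_
  ext j
  simp [hc, linearizedPolyMap_apply]

theorem linearIndependent_moore_s12 (hg : LinearIndependent Fq g) (hkn : k ≤ n) :
    LinearIndependent K fun i : Fin k => fun j => g j ^ Fintype.card Fq ^ (i : ℕ) := by
  rw [Fintype.linearIndependent_iff]
  intro c hc
  by_contra! hc0
  have := lt_rankQ_linearizedPolyMap_comp_add hg (c := c) (Function.ne_iff.mpr hc0)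
  rw [show linearizedPolyMap Fq c ∘ g = 0 from (sum_smul_moore g c).symm.trans hc,
    rankQ_zero] at this
  omega

theorem finrank_gabidulin (hg : LinearIndependent Fq g) (hkn : k ≤ n) :
    finrank K (gabidulin (Fintype.card Fq) g k) = k := by
  rw [gabidulin, finrank_span_eq_card (linearIndependent_moore_s12 hg hkn), Fintype.card_fin]

theorem gabidulin_eq_of_le (hg : LinearIndependent Fq g) (hkn : k ≤ n)
    {W : Submodule K (Fin n → K)} (hle : gabidulin (Fintype.card Fq) g k ≤ W)
    (hW : finrank K W ≤ k) : gabidulin (Fintype.card Fq) g k = W :=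
  Submodule.eq_of_le_of_finrank_le hle (hW.trans (finrank_gabidulin hg hkn).ge)

theorem exists_linearIndependent_orthogonal_moore {h : Fin n → K}
    (hh : LinearIndependent Fq h) :
    ∃ u : Fin n → K, LinearIndependent Fq u ∧
      ∀ s < n - 1, ∑ j, (h j ^ Fintype.card Fq) ^ Fintype.card Fq ^ s * u j = 0 := by
  have hhq : LinearIndependent Fq fun j => h j ^ Fintype.card Fq :=
    hh.map' (FiniteField.frobeniusAlgHom Fq K).toLinearMap
      (LinearMap.ker_eq_bot.mpr (FiniteField.frobeniusAlgHom Fq K).injective)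
  obtain ⟨φ, hφ⟩ := Module.Dual.exists_ker_eq
    (gabidulin (Fintype.card Fq) (fun j => h j ^ Fintype.card Fq) (n - 1))
    (by rw [finrank_gabidulin hhq (Nat.sub_le n 1), finrank_fin_fun])
  refine ⟨fun j => φ (Pi.single j 1),
    linearIndependent_apply_single_of_two_le_rankQ φ fun x hx hx0 => ?_, fun s hs => ?_⟩
  · have := lt_rankQ_add_of_mem_gabidulin hhq (hφ ▸ hx) hx0
    have := rankQ_le (Fq := Fq) x
    omega
  · rw [← LinearMap.apply_eq_sum_mul_apply_single, ← LinearMap.mem_ker, hφ]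
    exact Submodule.subset_span ⟨⟨s, hs⟩, rfl⟩

theorem exists_gabidulin_le_ker (f : Module.Dual K (Fin n → K))
    (hf : LinearIndependent Fq fun j => f (Pi.single j 1)) :
    ∃ g : Fin n → K, LinearIndependent Fq g ∧
      gabidulin (Fintype.card Fq) g (n - 1) ≤ LinearMap.ker f := by
  obtain ⟨u, hu, hperp⟩ := exists_linearIndependent_orthogonal_moore hf
  set q := Fintype.card Fq
  set τ := FiniteField.frobeniusAlgEquivOfAlgebraic Fq K ^ (n - 1)
  have hroot (x : K) : τ.symm x ^ q ^ (n - 1) = x := by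
    rw [← FiniteField.frobeniusAlgEquivOfAlgebraic_pow_apply, τ.apply_symm_apply]
  refine ⟨τ.symm ∘ u, hu.map' τ.symm.toLinearMap (LinearMap.ker_eq_bot.mpr τ.symm.injective), ?_⟩
  rw [gabidulin, Submodule.span_le]
  rintro _ ⟨i, rfl⟩
  have hi : (i : ℕ) < n - 1 := i.isLt
  rw [SetLike.mem_coe, LinearMap.mem_ker, LinearMap.apply_eq_sum_mul_apply_single]
  -- after raising to the power `q ^ (n - 1 - i)` this is the relation `hperp (n - 2 - i)`
  refine (pow_eq_zero_iff (pow_ne_zero (n - 1 - i) (Fintype.card_ne_zero (α := Fq)))).mp ?_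
  rw [sum_mul_pow_card_pow, ← hperp (n - 2 - i) (by omega)]
  refine Finset.sum_congr rfl fun j _ => ?_
  have hexp : q ^ (i : ℕ) * q ^ (n - 1 - i) = q ^ (n - 1) := by
    rw [← pow_add]; congr 1; omega
  have hexp' : q * q ^ (n - 2 - i) = q ^ (n - 1 - i) := by
    rw [← pow_succ']; congr 1; omega
  simp only [Function.comp_apply]
  rw [← pow_mul, hexp, hroot, ← pow_mul, hexp', mul_comm]

end Gabidulin

theorem stmt12_general {q n k : ℕ} (Fq K : Type) [Field Fq] [Fintype Fq] [Field K] [Fintype K]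
    [Algebra Fq K] (hq : Fintype.card Fq = q)
    (hk : 1 ≤ k) (hkn : k ≤ n) (hcase : k = 1 ∨ k = n - 1)
    (C : Submodule K (Fin n → K)) (hMRD : IsMRD Fq C k) :
    ∃ g : Fin n → K, LinearIndependent Fq g ∧
      C = Submodule.span K
        (Set.range fun i : Fin k => fun j : Fin n => (g j) ^ q ^ (i : ℕ)) := by
  subst hq
  obtain ⟨hdim, hdist⟩ := hMRD
  rcases hcase with rfl | rfl
  · have hC : C ≠ ⊥ := by
      rintro rfl
      exact zero_ne_one (finrank_bot K (Fin n → K) ▸ hdim)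
    obtain ⟨c, hcC, hc0⟩ := Submodule.exists_mem_ne_zero_of_ne_bot hC
    have hc : LinearIndependent Fq c := by
      have := minRankDist_le_rankQ (Fq := Fq) hcC hc0
      exact linearIndependent_of_le_rankQ (by omega)
    refine ⟨c, hc, (gabidulin_eq_of_le hc hkn ?_ hdim.le).symm⟩
    rw [gabidulin, Submodule.span_le]
    rintro _ ⟨i, rfl⟩
    simpa [Subsingleton.elim i 0] using hcC
  · obtain ⟨f, rfl⟩ := Module.Dual.exists_ker_eq C (by rw [hdim, finrank_fin_fun])
    have hh := linearIndependent_apply_single_of_two_le_rankQ (Fq := Fq) f fun x hx hx0 => by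
      have := minRankDist_le_rankQ (Fq := Fq) hx hx0
      omega
    obtain ⟨g, hg, hle⟩ := exists_gabidulin_le_ker f hh
    exact ⟨g, hg, (gabidulin_eq_of_le hg (Nat.sub_le n 1) hle hdim.le).symm⟩

/-- every linear MRD code of dimension `k = 1` or `k = n - 1`
is a Gabidulin code. -/
theorem stmt12 {q m n k : ℕ} (Fq K : Type) [Field Fq] [Fintype Fq] [Field K] [Fintype K]
    [Algebra Fq K] (hq : Fintype.card Fq = q) (hK : Fintype.card K = q ^ m)
    (hk : 1 ≤ k) (hkn : k ≤ n) (hcase : k = 1 ∨ k = n - 1)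
    (C : Submodule K (Fin n → K)) (hMRD : IsMRD Fq C k) :
    ∃ g : Fin n → K, LinearIndependent Fq g ∧
      C = Submodule.span K
        (Set.range fun i : Fin k => fun j : Fin n => (g j) ^ q ^ (i : ℕ)) :=
  stmt12_general Fq K hq hk hkn hcase C hMRD
end

section
/- Let C ⊆ F_{q^m}^n be an MRD code of dimension k over F_{q^m} with 1 ≤ k < n. Then C has a generator matrix in systematic form G = [I_k | X], where I_k is the k×k identity matrix and X ∈ F_{q^m}^{k×(n−k)}; moreover, every entry of X lies in F_{q^m} ∖ F_q. -/
open Matrix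

/-!
The `Fq`-rank of a vector is at most the size of any set of coordinates whose `Fq`-span contains
all its coordinates. A nonzero codeword of an MRD code has rank at least `n - k + 1`, so it
cannot vanish on `k` coordinates: projecting onto any `k` coordinates is an isomorphism of the
code onto `K^k`, which yields the systematic generator matrix `[I_k | X]`. If an entry of `X` in
row `i` were some `a ∈ Fq`, it would be `a` times the entry `1` of that row in the identity
block, so all coordinates of the row would lie in the `Fq`-span of only `n - k` of them.
-/

open Finset

section

variable {Fq K : Type} [Field Fq] [Field K] [Algebra Fq K] {n k : ℕ}

theorem rankQ_le_card_of_forall_mem_span (v : Fin n → K) (s : Finset (Fin n))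
    (h : ∀ j, v j ∈ Submodule.span Fq (v '' s)) : rankQ Fq v ≤ s.card := by
  classical
  calc rankQ Fq v ≤ (s.image v : Set K).finrank Fq := by
        refine Submodule.finrank_mono (Submodule.span_le.2 (Set.range_subset_iff.2 fun j => ?_))
        simpa using h j
    _ ≤ (s.image v).card := finrank_span_finset_le_card _
    _ ≤ s.card := card_image_le

theorem IsMRD.lt_rankQ {C : Submodule K (Fin n → K)} (hC : IsMRD Fq C k) {c : Fin n → K}
    (hc : c ∈ C) (hc0 : c ≠ 0) : n - k < rankQ Fq c := by
  rw [Nat.lt_iff_add_one_le, ← hC.2]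
  exact Nat.sInf_le ⟨c, ⟨hc, hc0⟩, rfl⟩

theorem card_compl_map_univ (ι : Fin k ↪ Fin n) : (univ.map ι)ᶜ.card = n - k := by
  simp [card_compl]

variable {C : Submodule K (Fin n → K)}

theorem injective_funLeft_comp_subtype_of_lt_rankQ
    (hC : ∀ c ∈ C, c ≠ 0 → n - k < rankQ Fq c) (ι : Fin k ↪ Fin n) :
    Function.Injective (LinearMap.funLeft K K ι ∘ₗ C.subtype) := by
  classical
  rw [← LinearMap.ker_eq_bot, Submodule.eq_bot_iff]
  rintro ⟨c, hc⟩ hker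
  have hcι : ∀ j, c (ι j) = 0 := fun j => congrFun hker j
  by_contra hc0
  refine (hC c hc (by simpa using hc0)).not_ge ?_
  rw [← card_compl_map_univ ι]
  refine rankQ_le_card_of_forall_mem_span c _ fun j => ?_
  by_cases hj : j ∈ (univ.map ι)ᶜ
  · exact Submodule.subset_span ⟨j, hj, rfl⟩
  · obtain ⟨j', rfl⟩ : ∃ j', ι j' = j := by simpa using hj
    simp [hcι]

theorem isGenMat_of_basis (b : Module.Basis (Fin k) K C) :
    IsGenMat C (fun i => (b i : Fin n → K)) := by
  refine ⟨b.linearIndependent.map' C.subtype C.ker_subtype, ?_⟩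
  rw [show Set.range (fun i => (b i : Fin n → K)) = C.subtype '' Set.range b from
    Set.range_comp C.subtype b, Submodule.span_image, b.span_eq, Submodule.map_subtype_top]

theorem exists_isGenMat_submatrix_eq_one (hC : ∀ c ∈ C, c ≠ 0 → n - k < rankQ Fq c)
    (hdim : Module.finrank K C = k) (ι : Fin k ↪ Fin n) :
    ∃ G : Matrix (Fin k) (Fin n) K, IsGenMat C G ∧ G.submatrix id ι = 1 := by
  set p := LinearMap.funLeft K K ι ∘ₗ C.subtype
  have hinj : Function.Injective p := injective_funLeft_comp_subtype_of_lt_rankQ hC ι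
  have hsurj : Function.Surjective p :=
    (LinearMap.injective_iff_surjective_of_finrank_eq_finrank (by simp [hdim])).1 hinj
  let b := (Pi.basisFun K (Fin k)).map (LinearEquiv.ofBijective p ⟨hinj, hsurj⟩).symm
  refine ⟨fun i => b i, isGenMat_of_basis b, ?_⟩
  ext i j
  have hbi : p (b i) = Pi.single i 1 := by
    simp only [b, Module.Basis.map_apply, Pi.basisFun_apply]
    exact (LinearEquiv.ofBijective p ⟨hinj, hsurj⟩).apply_symm_apply (Pi.single i 1)
  calc (b i : Fin n → K) (ι j) = p (b i) j := rfl
    _ = (1 : Matrix (Fin k) (Fin k) K) i j := by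
      simp_rw [hbi, Pi.single_apply, one_apply, @eq_comm _ j]

theorem notMem_range_algebraMap_of_submatrix_eq_one
    (hC : ∀ c ∈ C, c ≠ 0 → n - k < rankQ Fq c) {G : Matrix (Fin k) (Fin n) K}
    (hG : ∀ i, G i ∈ C) {ι : Fin k ↪ Fin n} (hsys : G.submatrix id ι = 1) (i : Fin k)
    {j₀ : Fin n} (hj₀ : j₀ ∉ Set.range ι) : G i j₀ ∉ (algebraMap Fq K).range := by
  classical
  rintro ⟨a, ha⟩
  have hGι : ∀ j, G i (ι j) = if i = j then 1 else 0 := fun j => by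
    simpa [Matrix.one_apply] using congrFun₂ hsys i j
  have hGi0 : G i ≠ 0 := fun h => by simpa [h] using hGι i
  set s := insert (ι i) ((univ.map ι)ᶜ.erase j₀)
  have hj₀c : j₀ ∈ (univ.map ι)ᶜ := by simpa using hj₀
  have hs : s.card = n - k := by
    have hpos := card_pos.2 ⟨j₀, hj₀c⟩
    rw [card_insert_of_notMem (by simp), card_erase_of_mem hj₀c]
    rw [card_compl_map_univ] at hpos ⊢
    omega
  have hone : (1 : K) ∈ Submodule.span Fq (G i '' s) :=
    Submodule.subset_span ⟨ι i, mem_insert_self _ _, by simp [hGι]⟩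
  refine (hC _ (hG i) hGi0).not_ge (hs ▸ rankQ_le_card_of_forall_mem_span _ s fun j => ?_)
  by_cases hj : j ∈ Set.range ι
  · obtain ⟨j', rfl⟩ := hj
    rw [hGι]
    split_ifs
    exacts [hone, Submodule.zero_mem _]
  by_cases hjj₀ : j = j₀
  · subst hjj₀
    rw [← ha, ← mul_one (algebraMap Fq K a), ← Algebra.smul_def]
    exact Submodule.smul_mem _ a hone
  · have hjs : j ∈ s := mem_insert_of_mem (mem_erase.2 ⟨hjj₀, by simpa using hj⟩)
    exact Submodule.subset_span ⟨j, hjs, rfl⟩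

end

theorem stmt14_general {n k : ℕ} (Fq K : Type) [Field Fq] [Field K]
    [Algebra Fq K] (hkn : k < n)
    (C : Submodule K (Fin n → K)) (hMRD : IsMRD Fq C k) :
    ∃ G : Matrix (Fin k) (Fin n) K, IsGenMat C G ∧
      (∀ i j : Fin k, G i (Fin.castLE hkn.le j) = if i = j then 1 else 0) ∧
      (∀ (i : Fin k) (j : Fin n), k ≤ (j : ℕ) → G i j ∉ (algebraMap Fq K).range) := by
  have hC : ∀ c ∈ C, c ≠ 0 → n - k < rankQ Fq c := fun c => hMRD.lt_rankQ
  obtain ⟨G, hG, hsys⟩ := exists_isGenMat_submatrix_eq_one hC hMRD.1 (Fin.castLEEmb hkn.le)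
  have hGC : ∀ i, G i ∈ C := fun i => hG.2 ▸ Submodule.subset_span ⟨i, rfl⟩
  refine ⟨G, hG, fun i j => by simpa [Matrix.one_apply] using congrFun₂ hsys i j,
    fun i j hj => notMem_range_algebraMap_of_submatrix_eq_one hC hGC hsys i ?_⟩
  rintro ⟨j', rfl⟩
  exact j'.isLt.not_ge (by simpa using hj)

/-- every MRD code of dimension `1 ≤ k < n` has a generator matrix
in systematic form `[I_k | X]` where all entries of `X` lie in `F_{q^m} \ F_q`. -/
theorem stmt14 {q m n k : ℕ} (Fq K : Type) [Field Fq] [Fintype Fq] [Field K] [Fintype K]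
    [Algebra Fq K] (hq : Fintype.card Fq = q) (hK : Fintype.card K = q ^ m)
    (hk : 1 ≤ k) (hkn : k < n)
    (C : Submodule K (Fin n → K)) (hMRD : IsMRD Fq C k) :
    ∃ G : Matrix (Fin k) (Fin n) K, IsGenMat C G ∧
      (∀ i j : Fin k, G i (Fin.castLE hkn.le j) = if i = j then 1 else 0) ∧
      (∀ (i : Fin k) (j : Fin n), k ≤ (j : ℕ) → G i j ∉ (algebraMap Fq K).range) :=
  stmt14_general Fq K hkn C hMRD
end
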